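/- Let $\mathcal{L}$ be a distraction matrix and let $I$ be a monomial ideal of $P$ generated by monomials $t_1,\dots,t_r$. Then $D_{\mathcal{L}}(I) := \bigoplus_d D_{\mathcal{L}}(I_d)$ is a homogeneous ideal of $P$, and it equals the ideal generated by $D_{\mathcal{L}}(t_1),\dots,D_{\mathcal{L}}(t_r)$. -/

import Mathlib

open MvPolynomial

noncomputable section
/-- A distraction matrix: a family of linear forms `L i j` (`1 ≤ i ≤ n`, `j ∈ ℕ`) such that
every selection `L 1 j₁, …, L n jₙ` spans the space of linear forms, and every row is
eventually constant. -/
def IsDistractionMatrix (n : ℕ) (K : Type*) [Field K]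
    (L : Fin n → ℕ → MvPolynomial (Fin n) K) : Prop :=
  (∀ i j, (L i j).IsHomogeneous 1) ∧
  (∀ js : Fin n → ℕ, ∀ k : Fin n,
      (X k : MvPolynomial (Fin n) K) ∈
        Submodule.span K (Set.range fun i => L i (js i))) ∧
  (∃ N : ℕ, ∀ i : Fin n, ∀ j : ℕ, N < j → L i j = L i N)

/-- The distraction of the monomial `x^d`: `∏ i ∏_{j=1}^{d i} L i j`. -/
def distrMon (n : ℕ) (K : Type*) [Field K]
    (L : Fin n → ℕ → MvPolynomial (Fin n) K) (d : Fin n →₀ ℕ) :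
    MvPolynomial (Fin n) K :=
  ∏ i, ∏ j ∈ Finset.range (d i), L i (j + 1)

/-- The distraction operator `D_L`, extended `K`-linearly from monomials to all of `P`. -/
def distr (n : ℕ) (K : Type*) [Field K]
    (L : Fin n → ℕ → MvPolynomial (Fin n) K) (f : MvPolynomial (Fin n) K) :
    MvPolynomial (Fin n) K :=
  ∑ d ∈ f.support, coeff d f • distrMon n K L d

/-!
Let `S` be the set of exponents of the monomials of `I`, the upper closure of the `t i`, and let
`M` be the `K`-span of the `distrMon d` with `d ∈ S`. As `I` is spanned by its monomials,
`M = span D_L(I)`. Since `distrMon s ∣ distrMon d` for `s ≤ d`, `M` lies in the ideal `J` generated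
by the `D_L(t i)`. Conversely `M` is an ideal: `x_k` is a linear combination of the
`L i (d i + 1)`, and `L i (d i + 1) * distrMon d = distrMon (d + eᵢ)` with `d + eᵢ ∈ S`.
Hence `M = J`, and `J` is homogeneous because its generators are.
-/

theorem Submodule.mul_mem_of_forall_X_mul_mem {σ R : Type*} [CommSemiring R]
    (M : Submodule R (MvPolynomial σ R)) (hX : ∀ k, ∀ f ∈ M, X k * f ∈ M)
    (p : MvPolynomial σ R) {f : MvPolynomial σ R} (hf : f ∈ M) : p * f ∈ M := by
  induction p using MvPolynomial.induction_on generalizing f with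
  | C c => rw [C_mul']; exact M.smul_mem c hf
  | add p q hp hq => rw [add_mul]; exact M.add_mem (hp hf) (hq hf)
  | mul_X p k hp => rw [mul_assoc]; exact hp (hX k f hf)

section Distraction

variable {n : ℕ} {K : Type*} [Field K] {L : Fin n → ℕ → MvPolynomial (Fin n) K}

theorem distr_monomial_one (d : Fin n →₀ ℕ) :
    distr n K L (monomial d 1) = distrMon n K L d := by
  simp [distr]

theorem distr_mem_span_distrMon_image {S : Set (Fin n →₀ ℕ)} {f : MvPolynomial (Fin n) K}
    (hf : ↑f.support ⊆ S) : distr n K L f ∈ Submodule.span K (distrMon n K L '' S) :=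
  Submodule.sum_mem _ fun d hd => Submodule.smul_mem _ _ (Submodule.subset_span ⟨d, hf hd, rfl⟩)

theorem distrMon_isHomogeneous (hL : ∀ i j, (L i j).IsHomogeneous 1) (d : Fin n →₀ ℕ) :
    (distrMon n K L d).IsHomogeneous (∑ i, d i) :=
  IsHomogeneous.prod _ _ _ fun i _ => by
    simpa using IsHomogeneous.prod (Finset.range (d i)) _ _ fun j _ => hL i (j + 1)

theorem distrMon_add_single (d : Fin n →₀ ℕ) (i : Fin n) :
    distrMon n K L (d + Finsupp.single i 1) = L i (d i + 1) * distrMon n K L d := by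
  simp only [distrMon, Finsupp.add_apply, Finsupp.single_apply]
  rw [← Finset.mul_prod_erase _ _ (Finset.mem_univ i),
    ← Finset.mul_prod_erase _ (fun i' => ∏ j ∈ Finset.range (d i'), L i' (j + 1))
      (Finset.mem_univ i), if_pos rfl, Finset.prod_range_succ, mul_comm _ (L i _), mul_assoc]
  congr 2
  refine Finset.prod_congr rfl fun i' hi' => ?_
  rw [if_neg (Finset.ne_of_mem_erase hi').symm, add_zero]

theorem distrMon_dvd_distrMon {s d : Fin n →₀ ℕ} (h : s ≤ d) :
    distrMon n K L s ∣ distrMon n K L d :=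
  Finset.prod_dvd_prod_of_dvd _ _ fun i _ =>
    Finset.prod_dvd_prod_of_subset _ _ _ (Finset.range_subset_range.mpr (h i))

theorem X_mul_mem_span_distrMon_image
    (hL : ∀ (js : Fin n → ℕ) (k : Fin n), X k ∈ Submodule.span K (Set.range fun i => L i (js i)))
    {S : Set (Fin n →₀ ℕ)} (hS : IsUpperSet S) (k : Fin n) {f : MvPolynomial (Fin n) K}
    (hf : f ∈ Submodule.span K (distrMon n K L '' S)) :
    X k * f ∈ Submodule.span K (distrMon n K L '' S) := by
  induction hf using Submodule.span_induction with
  | mem _ hg =>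
    obtain ⟨d, hd, rfl⟩ := hg
    have hXd := Submodule.mem_map_of_mem (f := LinearMap.mulRight K (distrMon n K L d))
      (hL (fun i => d i + 1) k)
    rw [Submodule.map_span] at hXd
    refine Submodule.span_mono ?_ hXd
    rintro _ ⟨_, ⟨i, rfl⟩, rfl⟩
    exact ⟨d + Finsupp.single i 1, hS le_self_add hd, distrMon_add_single d i⟩
  | zero => simp
  | add _ _ _ _ hg hh => rw [mul_add]; exact Submodule.add_mem _ hg hh
  | smul c _ _ hg => rw [mul_smul_comm]; exact Submodule.smul_mem _ c hg

theorem span_distrMon_image_upperClosure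
    (hL : ∀ (js : Fin n → ℕ) (k : Fin n), X k ∈ Submodule.span K (Set.range fun i => L i (js i)))
    (s : Set (Fin n →₀ ℕ)) :
    Submodule.span K (distrMon n K L '' upperClosure s) =
      (Ideal.span (distrMon n K L '' s)).restrictScalars K := by
  apply le_antisymm
  · rw [Submodule.span_le]
    rintro _ ⟨d, ⟨a, ha, had⟩, rfl⟩
    exact Ideal.mem_of_dvd _ (distrMon_dvd_distrMon had) (Ideal.subset_span ⟨a, ha, rfl⟩)
  · intro f hf
    induction hf using Submodule.span_induction with
    | mem _ hg =>
      obtain ⟨a, ha, rfl⟩ := hg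
      exact Submodule.subset_span ⟨a, subset_upperClosure ha, rfl⟩
    | zero => exact Submodule.zero_mem _
    | add _ _ _ _ hg hh => exact Submodule.add_mem _ hg hh
    | smul p _ _ hg =>
      exact Submodule.mul_mem_of_forall_X_mul_mem _
        (fun k _ => X_mul_mem_span_distrMon_image hL (upperClosure s).upper k) p hg

theorem span_distr_image_ideal_span_monomial (s : Set (Fin n →₀ ℕ)) :
    Submodule.span K (distr n K L '' Ideal.span ((monomial · (1 : K)) '' s)) =
      Submodule.span K (distrMon n K L '' upperClosure s) := by
  apply le_antisymm <;> rw [Submodule.span_le]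
  · rintro _ ⟨f, hf, rfl⟩
    exact distr_mem_span_distrMon_image (mem_ideal_span_monomial_image.mp hf)
  · rintro _ ⟨d, hd, rfl⟩
    refine Submodule.subset_span ⟨monomial d 1, ?_, distr_monomial_one d⟩
    rw [SetLike.mem_coe, mem_ideal_span_monomial_image]
    exact fun e he => Finset.mem_singleton.mp (support_monomial_subset he) ▸ hd

attribute [local instance] MvPolynomial.gradedAlgebra in
theorem isHomogeneous_ideal_span_distrMon_image (hL : ∀ i j, (L i j).IsHomogeneous 1)
    (s : Set (Fin n →₀ ℕ)) :
    (Ideal.span (distrMon n K L '' s)).IsHomogeneous (homogeneousSubmodule (Fin n) K) :=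
  Ideal.homogeneous_span _ _ fun _ ⟨d, _, hd⟩ => ⟨_, hd ▸ distrMon_isHomogeneous hL d⟩

end Distraction

theorem distr_monomialIdeal_general (n : ℕ) (K : Type*) [Field K]
    (L : Fin n → ℕ → MvPolynomial (Fin n) K) (hL : IsDistractionMatrix n K L)
    (r : ℕ) (t : Fin r → (Fin n →₀ ℕ))
    (I : Ideal (MvPolynomial (Fin n) K))
    (hI : I = Ideal.span (Set.range fun i => monomial (t i) (1 : K))) :
    Submodule.span K (distr n K L '' I) =
      Submodule.restrictScalars K
        (Ideal.span (Set.range fun i => distr n K L (monomial (t i) (1 : K)))) ∧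
    ∀ f ∈ Ideal.span (Set.range fun i => distr n K L (monomial (t i) (1 : K))),
      ∀ m : ℕ, homogeneousComponent m f ∈
        Ideal.span (Set.range fun i => distr n K L (monomial (t i) (1 : K))) := by
  obtain ⟨hhom, hspan, -⟩ := hL
  have hgens : Set.range (fun i => distr n K L (monomial (t i) (1 : K))) =
      distrMon n K L '' Set.range t := by
    simp only [distr_monomial_one, ← Set.range_comp, Function.comp_def]
  have hI' : I = Ideal.span ((monomial · (1 : K)) '' Set.range t) := by
    rw [hI, ← Set.range_comp]; rfl
  rw [hgens, hI', span_distr_image_ideal_span_monomial,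
    span_distrMon_image_upperClosure hspan]
  exact ⟨rfl, fun f hf m => homogeneousComponent_mem_of_mem
    (isHomogeneous_ideal_span_distrMon_image hhom _) hf m⟩

/-- for a monomial ideal `I = (t_1,…,t_r)`, the image `D_L(I)` is a homogeneous
ideal of `P`, namely the ideal generated by `D_L(t_1),…,D_L(t_r)`. -/
theorem distr_monomialIdeal (n : ℕ) (K : Type*) [Field K] [Infinite K]
    (L : Fin n → ℕ → MvPolynomial (Fin n) K) (hL : IsDistractionMatrix n K L)
    (r : ℕ) (t : Fin r → (Fin n →₀ ℕ))
    (I : Ideal (MvPolynomial (Fin n) K))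
    (hI : I = Ideal.span (Set.range fun i => monomial (t i) (1 : K))) :
    Submodule.span K (distr n K L '' I) =
      Submodule.restrictScalars K
        (Ideal.span (Set.range fun i => distr n K L (monomial (t i) (1 : K)))) ∧
    ∀ f ∈ Ideal.span (Set.range fun i => distr n K L (monomial (t i) (1 : K))),
      ∀ m : ℕ, homogeneousComponent m f ∈
        Ideal.span (Set.range fun i => distr n K L (monomial (t i) (1 : K))) :=
  distr_monomialIdeal_general n K L hL r t I hI
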